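/- Let G be an edge-weighted graph with weights in [M] and let H be the 4-partite graph with parts A, B, C, A' (copies of V(G)), where each edge (u,v) of G of weight w induces edges (u_A, v_B), (u_B, v_C), (u_C, v_{A'}) each of weight w + 2M, plus vertices s, t with edges (s, u_{i,A}) and (u_{i,A'}, t) of weight 3iM for the i-th vertex u_i. Then for each i for which only vertices u_j with j ≥ i are connected to s and t, the shortest s-t path in H has weight (6i+6)M + w(Δ), where w(Δ) is the minimum weight of a triangle of G containing u_i, provided u_i lies in a triangle. -/

import Mathlib

/-!
A function `φ` on the vertices of `H` with `φ t = 0` and `φ a ≤ c a b + φ b` across every edge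
bounds the weight of every walk from `a` to `t` below by `φ a` (LP duality for shortest paths).
Writing `B = 3(i+1)M` and `D` for the minimum weight of a triangle through `uᵢ`, such a potential
with `φ s = 2B + 6M + D` exists: entering or leaving `H` at `uⱼ` with `j > i` costs an extra
`3M ≥ D`, a walk through the middle layers that does not close up at `uᵢ` pays `3M ≥ D`
instead of closing the triangle, and walks that backtrack only pay more. A triangle of weight
`D` through `uᵢ` gives a walk of exactly this weight.
-/

open SimpleGraph

theorem SimpleGraph.Walk.apply_le_sum_map_darts_add {V α : Type*} [AddCommMonoid α]
    [PartialOrder α] [IsOrderedAddMonoid α] {G : SimpleGraph V} (c : V → V → α)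
    (φ : V → α) (hφ : ∀ a b, G.Adj a b → φ a ≤ c a b + φ b) :
    ∀ {u v : V} (p : G.Walk u v), φ u ≤ (p.darts.map fun d => c d.fst d.snd).sum + φ v
  | _, _, .nil => by simp
  | _, _, .cons h p => by
    rw [darts_cons, List.map_cons, List.sum_cons, add_assoc]
    exact (hφ _ _ h).trans (add_le_add_right (apply_le_sum_map_darts_add c φ hφ p) _)

namespace TriangleReduction

variable {n : ℕ}

def graph (G : SimpleGraph (Fin n)) (i : Fin n) : SimpleGraph ((Fin n × Fin 4) ⊕ Bool) :=
  SimpleGraph.fromRel fun p q =>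
    (∃ u v, G.Adj u v ∧ ∃ k : Fin 3,
        p = Sum.inl (u, k.castSucc) ∧ q = Sum.inl (v, k.succ)) ∨
    (∃ j : Fin n, i ≤ j ∧
      (p = Sum.inr false ∧ q = Sum.inl (j, 0) ∨
       p = Sum.inl (j, 3) ∧ q = Sum.inr true))

def weight (M : ℕ) (w : Sym2 (Fin n) → ℕ) :
    (Fin n × Fin 4) ⊕ Bool → (Fin n × Fin 4) ⊕ Bool → ℕ
  | Sum.inl (u, _), Sum.inl (v, _) => w (s(u, v)) + 2 * M
  | Sum.inr _, Sum.inl (j, _) => 3 * ((j : ℕ) + 1) * M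
  | Sum.inl (j, _), Sum.inr _ => 3 * ((j : ℕ) + 1) * M
  | Sum.inr _, Sum.inr _ => 0

def triangleWeights (G : SimpleGraph (Fin n)) (w : Sym2 (Fin n) → ℕ) (i : Fin n) : Set ℕ :=
  {x | ∃ y z, G.Adj i y ∧ G.Adj y z ∧ G.Adj z i ∧ x = w s(i, y) + w s(y, z) + w s(z, i)}

variable {G : SimpleGraph (Fin n)} {i : Fin n}

lemma graph_adj_layer {u v : Fin n} (h : G.Adj u v) (k : Fin 3) :
    (graph G i).Adj (.inl (u, k.castSucc)) (.inl (v, k.succ)) :=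
  (fromRel_adj _ _ _).2 ⟨by simp [Fin.castSucc_lt_succ.ne],
    .inl (.inl ⟨u, v, h, k, rfl, rfl⟩)⟩

lemma graph_adj_source {j : Fin n} (h : i ≤ j) : (graph G i).Adj (.inr false) (.inl (j, 0)) :=
  (fromRel_adj _ _ _).2 ⟨by simp, .inl (.inr ⟨j, h, .inl ⟨rfl, rfl⟩⟩)⟩

lemma graph_adj_sink {j : Fin n} (h : i ≤ j) : (graph G i).Adj (.inl (j, 3)) (.inr true) :=
  (fromRel_adj _ _ _).2 ⟨by simp, .inl (.inr ⟨j, h, .inr ⟨rfl, rfl⟩⟩)⟩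

/- `potential G w i M D` with `D` the minimum triangle weight at `i` is a feasible dual solution
for shortest `s`–`t` walks in `graph G i`: on layer `k` it is the cost `3(i+1)M + 2M(3-k)` still
due to `H` itself, plus `slack … k v`, a lower bound on the `G`-weight still to be paid. -/
open Classical in
noncomputable def slack (G : SimpleGraph (Fin n)) (w : Sym2 (Fin n) → ℕ) (i : Fin n)
    (M D : ℕ) : Fin 4 → Fin n → ℕ
  | 0, v => if v = i then D else 0
  | 1, v => if G.Adj i v then D - w s(i, v) else 0
  | 2, v => if G.Adj v i then w s(v, i) else 3 * M
  | 3, v => if v = i then 0 else 3 * M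

noncomputable def potential (G : SimpleGraph (Fin n)) (w : Sym2 (Fin n) → ℕ) (i : Fin n)
    (M D : ℕ) : (Fin n × Fin 4) ⊕ Bool → ℕ
  | .inr false => (6 * ((i : ℕ) + 1) + 6) * M + D
  | .inr true => 0
  | .inl (v, k) => 3 * ((i : ℕ) + 1) * M + 2 * M * (3 - k) + slack G w i M D k v

variable {w : Sym2 (Fin n) → ℕ} {M D : ℕ}

lemma slack_le (hw : ∀ e ∈ G.edgeSet, w e ≤ M) (hD : D ≤ 3 * M) (k : Fin 4) (v : Fin n) :
    slack G w i M D k v ≤ 3 * M := by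
  fin_cases k <;> simp only [slack] <;> split_ifs with h <;> try omega
  have := hw _ (G.mem_edgeSet.2 h)
  omega

lemma slack_castSucc_le (hw : ∀ e ∈ G.edgeSet, w e ≤ M) (hD : D ≤ 3 * M)
    (hDtri : D ∈ lowerBounds (triangleWeights G w i))
    {u v : Fin n} (huv : G.Adj u v) (k : Fin 3) :
    slack G w i M D k.castSucc u ≤ w s(u, v) + slack G w i M D k.succ v := by
  fin_cases k <;> simp only [slack, Fin.reduceFinMk, Fin.reduceCastSucc, Fin.reduceSucc]
  · split_ifs with hu hv
    · subst hu; omega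
    · exact absurd (hu ▸ huv) hv
    all_goals omega
  · split_ifs with hu hv
    · have := hDtri ⟨u, v, hu, huv, hv, rfl⟩
      omega
    all_goals omega
  · split_ifs with hu hv hv
    · subst hv; omega
    · have := hw _ (G.mem_edgeSet.2 hu); omega
    · exact absurd huv (hv ▸ hu)
    · omega

lemma potential_layer_le (hw : ∀ e ∈ G.edgeSet, w e ≤ M) (hD : D ≤ 3 * M)
    (hDtri : D ∈ lowerBounds (triangleWeights G w i))
    {u v : Fin n} (huv : G.Adj u v) (k : Fin 3) :
    potential G w i M D (.inl (u, k.castSucc)) ≤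
        weight M w (.inl (u, k.castSucc)) (.inl (v, k.succ)) +
          potential G w i M D (.inl (v, k.succ)) ∧
      potential G w i M D (.inl (v, k.succ)) ≤
        weight M w (.inl (v, k.succ)) (.inl (u, k.castSucc)) +
          potential G w i M D (.inl (u, k.castSucc)) := by
  have hoff : 2 * M * (3 - (k : ℕ)) = 2 * M + 2 * M * (3 - ((k : ℕ) + 1)) := by
    rw [show 3 - (k : ℕ) = 3 - ((k : ℕ) + 1) + 1 by omega]
    ring
  have := slack_castSucc_le hw hD hDtri huv k
  have := slack_le (i := i) hw hD k.succ v
  simp only [potential, weight, Fin.val_castSucc, Fin.val_succ]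
  omega

lemma potential_le_of_adj (hw : ∀ e ∈ G.edgeSet, w e ≤ M) (hD : D ≤ 3 * M)
    (hDtri : D ∈ lowerBounds (triangleWeights G w i))
    {a b : (Fin n × Fin 4) ⊕ Bool} (h : (graph G i).Adj a b) :
    potential G w i M D a ≤ weight M w a b + potential G w i M D b := by
  have hlater : ∀ {j : Fin n}, i < j →
      3 * ((i : ℕ) + 1) * M + 3 * M ≤ 3 * ((j : ℕ) + 1) * M :=
    fun {j} hij => by have : (i : ℕ) + 1 ≤ j := hij; nlinarith
  obtain ⟨-, h | h⟩ := (fromRel_adj _ _ _).1 h <;>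
    obtain ⟨u, v, huv, k, rfl, rfl⟩ | ⟨j, hij, ⟨rfl, rfl⟩ | ⟨rfl, rfl⟩⟩ := h
  · exact (potential_layer_le hw hD hDtri huv k).1
  · simp only [potential, weight, slack, Fin.coe_ofNat_eq_mod, Nat.reduceMod, Nat.sub_zero]
    rcases hij.eq_or_lt with rfl | hlt
    · simp only [↓reduceIte]
      linarith
    · simp only [if_neg hlt.ne']
      linarith [hlater hlt]
  · simp only [potential, weight, slack, Fin.coe_ofNat_eq_mod, Nat.reduceMod, Nat.sub_self]
    rcases hij.eq_or_lt with rfl | hlt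
    · simp only [↓reduceIte]
      linarith
    · simp only [if_neg hlt.ne']
      linarith [hlater hlt]
  · exact (potential_layer_le hw hD hDtri huv k).2
  · have := slack_le (i := i) hw hD 0 j
    simp only [potential, weight, Fin.coe_ofNat_eq_mod, Nat.reduceMod, Nat.sub_zero]
    nlinarith
  · exact Nat.zero_le _

lemma exists_walk_sum_eq_of_triangle {y z : Fin n} (hiy : G.Adj i y) (hyz : G.Adj y z)
    (hzi : G.Adj z i) : ∃ p : (graph G i).Walk (.inr false) (.inr true),
      (p.darts.map fun d => weight M w d.fst d.snd).sum =
        (6 * ((i : ℕ) + 1) + 6) * M + (w s(i, y) + w s(y, z) + w s(z, i)) := by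
  refine ⟨.cons (graph_adj_source le_rfl) <| .cons (graph_adj_layer hiy 0) <|
    .cons (graph_adj_layer hyz 1) <| .cons (graph_adj_layer hzi 2) <|
    .cons (graph_adj_sink le_rfl) .nil, ?_⟩
  simp only [Walk.darts_cons, Walk.darts_nil, List.map_cons, List.map_nil, List.sum_cons,
    List.sum_nil, weight]
  ring

end TriangleReduction

open TriangleReduction in
theorem stmt_15 (n M : ℕ) (G : SimpleGraph (Fin n)) (w : Sym2 (Fin n) → ℕ)
    (hw : ∀ e ∈ G.edgeSet, 1 ≤ w e ∧ w e ≤ M) (i : Fin n)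
    (htri : ∃ y z, G.Adj i y ∧ G.Adj y z ∧ G.Adj z i) :
    let W := (Fin n × Fin 4) ⊕ Bool
    let H : SimpleGraph W := SimpleGraph.fromRel (fun p q =>
      (∃ u v, G.Adj u v ∧ ∃ k : Fin 3,
          p = Sum.inl (u, k.castSucc) ∧ q = Sum.inl (v, k.succ)) ∨
      (∃ j : Fin n, i ≤ j ∧
        (p = Sum.inr false ∧ q = Sum.inl (j, 0) ∨
         p = Sum.inl (j, 3) ∧ q = Sum.inr true)))
    let cW : W → W → ℕ := fun a b =>
      match a, b with
      | Sum.inl (u, _), Sum.inl (v, _) => w (s(u, v)) + 2 * M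
      | Sum.inr _, Sum.inl (j, _) => 3 * ((j : ℕ) + 1) * M
      | Sum.inl (j, _), Sum.inr _ => 3 * ((j : ℕ) + 1) * M
      | _, _ => 0
    IsLeast {x : ℕ | ∃ p : H.Walk (Sum.inr false) (Sum.inr true),
        (p.darts.map (fun d => cW d.toProd.1 d.toProd.2)).sum = x}
      ((6 * ((i : ℕ) + 1) + 6) * M +
        sInf {x : ℕ | ∃ y z, G.Adj i y ∧ G.Adj y z ∧ G.Adj z i ∧
          x = w (s(i, y)) + w (s(y, z)) + w (s(z, i))}) := by
  intro W H cW
  have hcW : cW = weight M w := by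
    funext a b
    rcases a with _ | _ <;> rcases b with _ | _ <;> rfl
  change IsLeast _ ((6 * ((i : ℕ) + 1) + 6) * M + sInf (triangleWeights G w i))
  have hwM : ∀ e ∈ G.edgeSet, w e ≤ M := fun e he => (hw e he).2
  obtain ⟨y, z, hiy, hyz, hzi, hDyz⟩ :
      sInf (triangleWeights G w i) ∈ triangleWeights G w i := by
    obtain ⟨y, z, h₁, h₂, h₃⟩ := htri
    exact Nat.sInf_mem ⟨_, y, z, h₁, h₂, h₃, rfl⟩
  set D := sInf (triangleWeights G w i)
  have hD : D ≤ 3 * M := by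
    have := hwM s(i, y) hiy; have := hwM s(y, z) hyz; have := hwM s(z, i) hzi; omega
  have hDtri : D ∈ lowerBounds (triangleWeights G w i) := fun _ => Nat.sInf_le
  refine ⟨hDyz ▸ hcW ▸ exists_walk_sum_eq_of_triangle hiy hyz hzi, ?_⟩
  rintro _ ⟨p, rfl⟩
  rw [hcW]
  have key := p.apply_le_sum_map_darts_add _ (potential G w i M D)
    fun a b => potential_le_of_adj hwM hD hDtri
  simp only [potential, add_zero] at key
  exact key
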